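/- Let V_Y and W_Y be r×r real symmetric positive definite matrices, let U ∈ St(r,p₁) with orthonormal completion U⊥, and let Y ∈ ℝ^{p₂×r} have full column rank r. Let D ∈ ℝ^{(p₁−r)×r}, set θ_U := U⊥D, let θ_Y ∈ ℝ^{p₂×r} be arbitrary, and set ξ := U θ_Yᵀ + θ_U Yᵀ. Then, with g := tr(V_Y DᵀD) + tr(W_Y θ_Yᵀθ_Y) and V_Y^{1/2} the symmetric positive definite square root of V_Y, it holds that min( λmin(W_Y⁻¹), λmin(V_Y^{-1/2} YᵀY V_Y^{-1/2}) )·g ≤ ‖ξ‖_F² ≤ max( λmax(W_Y⁻¹), λmax(V_Y^{-1/2} YᵀY V_Y^{-1/2}) )·g. -/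

import Mathlib

open Matrix

/-- The smallest eigenvalue of a (Hermitian) real matrix; junk value `0` otherwise. -/
noncomputable def eigMin {n : ℕ} (M : Matrix (Fin n) (Fin n) ℝ) : ℝ := by
  classical exact if h : M.IsHermitian then ⨅ i, h.eigenvalues i else 0

/-- The largest eigenvalue of a (Hermitian) real matrix; junk value `0` otherwise. -/
noncomputable def eigMax {n : ℕ} (M : Matrix (Fin n) (Fin n) ℝ) : ℝ := by
  classical exact if h : M.IsHermitian then ⨆ i, h.eigenvalues i else 0

/-- The squared Frobenius norm `‖A‖_F² = tr(AᵀA)`. -/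
noncomputable def frobSq {m n : ℕ} (A : Matrix (Fin m) (Fin n) ℝ) : ℝ :=
  Matrix.trace (Aᵀ * A)

/-- The positive semidefinite square root of a positive semidefinite matrix, spelled out as
`Matrix.PosSemidef.sqrt` was defined in the older Mathlib (since removed). -/
noncomputable def psdSqrt {n : Type*} [Fintype n] [DecidableEq n] {A : Matrix n n ℝ}
    (hA : A.PosSemidef) : Matrix n n ℝ :=
  hA.1.eigenvectorUnitary.1 * diagonal ((↑) ∘ (√·) ∘ hA.1.eigenvalues) *
  (star hA.1.eigenvectorUnitary : Matrix n n ℝ)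

/-!
With `ξ = U θ_Yᵀ + U⊥ (D Yᵀ)` and `[U U⊥]` having orthonormal columns,
`‖ξ‖_F² = tr(θ_Yᵀθ_Y) + tr(DᵀD YᵀY)`. Each summand has the form `tr(MN)` with `M ⪰ 0`; writing
`R = V^{1/2}`, `tr(MN) = tr(PS)` with `P = RMR ⪰ 0`, `tr P = tr(VM)` and `S = R⁻¹NR⁻¹`, and
`λmin(S) tr P ≤ tr(PS) ≤ λmax(S) tr P` because `S - λmin(S)` and `λmax(S) - S` are positive
semidefinite. The `θ_Y` term is the case `N = 1`, `V = W_Y`, where `S = W_Y⁻¹`.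
-/
open scoped MatrixOrder

lemma psdSqrt_eq_sqrt {n : Type*} [Fintype n] [DecidableEq n] {A : Matrix n n ℝ}
    (hA : A.PosSemidef) : psdSqrt hA = CFC.sqrt A := by
  rw [CFC.sqrt_eq_real_sqrt A hA.nonneg, cfcₙ_eq_cfc, hA.1.cfc_eq]
  rfl

namespace Matrix

lemma posSemidef_transpose_mul_self {m n : Type*} [Fintype m] [Finite n] (A : Matrix m n ℝ) :
    (Aᵀ * A).PosSemidef := by
  simpa only [conjTranspose_eq_transpose_of_trivial] using posSemidef_conjTranspose_mul_self A

section

variable {ι : Type*} [Fintype ι] [DecidableEq ι]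

lemma PosSemidef.trace_mul_nonneg {P Q : Matrix ι ι ℝ} (hP : P.PosSemidef) (hQ : Q.PosSemidef) :
    0 ≤ (P * Q).trace := by
  obtain ⟨B, rfl⟩ := CStarAlgebra.nonneg_iff_eq_star_mul_self.mp hP.nonneg
  rw [mul_assoc, trace_mul_comm, mul_assoc, star_eq_conjTranspose, ← mul_assoc]
  exact (hQ.mul_mul_conjTranspose_same B).trace_nonneg

lemma PosSemidef.trace_mul_mono {P Q Q' : Matrix ι ι ℝ} (hP : P.PosSemidef) (h : Q ≤ Q') :
    (P * Q).trace ≤ (P * Q').trace := by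
  have := hP.trace_mul_nonneg (le_iff.mp h)
  rwa [mul_sub, trace_sub, sub_nonneg] at this

lemma trace_mul_algebraMap (P : Matrix ι ι ℝ) (c : ℝ) :
    (P * algebraMap ℝ _ c).trace = c * P.trace := by
  rw [Algebra.algebraMap_eq_smul_one, mul_smul_one, trace_smul, smul_eq_mul]

end

variable {n : ℕ} {P S : Matrix (Fin n) (Fin n) ℝ}

lemma IsHermitian.algebraMap_eigMin_le (hS : S.IsHermitian) : algebraMap ℝ _ (eigMin S) ≤ S := by
  refine algebraMap_le_of_le_spectrum (fun x hx => ?_) hS.isSelfAdjoint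
  obtain ⟨i, rfl⟩ := hS.spectrum_real_eq_range_eigenvalues ▸ hx
  rw [eigMin, dif_pos hS]
  exact ciInf_le (Finite.bddBelow_range _) i

lemma IsHermitian.le_algebraMap_eigMax (hS : S.IsHermitian) : S ≤ algebraMap ℝ _ (eigMax S) := by
  refine le_algebraMap_of_spectrum_le (fun x hx => ?_) hS.isSelfAdjoint
  obtain ⟨i, rfl⟩ := hS.spectrum_real_eq_range_eigenvalues ▸ hx
  rw [eigMax, dif_pos hS]
  exact le_ciSup (Finite.bddAbove_range _) i

lemma PosSemidef.eigMin_mul_trace_le (hP : P.PosSemidef) (hS : S.IsHermitian) :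
    eigMin S * P.trace ≤ (P * S).trace :=
  trace_mul_algebraMap P _ ▸ hP.trace_mul_mono hS.algebraMap_eigMin_le

lemma PosSemidef.trace_mul_le_eigMax_mul (hP : P.PosSemidef) (hS : S.IsHermitian) :
    (P * S).trace ≤ eigMax S * P.trace :=
  trace_mul_algebraMap P _ ▸ hP.trace_mul_mono hS.le_algebraMap_eigMax

lemma trace_mul_mem_Icc_of_posDef {V M N : Matrix (Fin n) (Fin n) ℝ} (hV : V.PosDef)
    (hM : M.PosSemidef) (hN : N.IsHermitian) :
    (M * N).trace ∈ Set.Icc (eigMin ((CFC.sqrt V)⁻¹ * N * (CFC.sqrt V)⁻¹) * (V * M).trace)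
      (eigMax ((CFC.sqrt V)⁻¹ * N * (CFC.sqrt V)⁻¹) * (V * M).trace) := by
  set R := CFC.sqrt V
  have hR : R.IsHermitian := (CFC.sqrt_nonneg V).posSemidef.isHermitian
  have hRR : R * R = V := CFC.sqrt_mul_sqrt_self V hV.posSemidef.nonneg
  have hP : (R * M * R).PosSemidef := by
    simpa only [hR.eq] using hM.mul_mul_conjTranspose_same R
  have hS : (R⁻¹ * N * R⁻¹).IsHermitian := by
    simpa only [hR.inv.eq] using isHermitian_mul_mul_conjTranspose R⁻¹ hN
  have htrP : (R * M * R).trace = (V * M).trace := by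
    rw [trace_mul_cycle, ← hRR, mul_assoc]
  have hdet : IsUnit R.det :=
    (isUnit_iff_isUnit_det R).mp ((CFC.isUnit_sqrt_iff V hV.posSemidef.nonneg).mpr hV.isUnit)
  have htrPS : (R * M * R * (R⁻¹ * N * R⁻¹)).trace = (M * N).trace := by
    rw [← mul_assoc, ← mul_assoc, mul_nonsing_inv_cancel_right _ _ hdet, mul_assoc R,
      trace_mul_cycle, nonsing_inv_mul R hdet, one_mul]
  rw [← htrP, ← htrPS]
  exact ⟨hP.eigMin_mul_trace_le hS, hP.trace_mul_le_eigMax_mul hS⟩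

end Matrix

lemma min_mul_add_le {a b x y : ℝ} (hx : 0 ≤ x) (hy : 0 ≤ y) :
    min a b * (x + y) ≤ a * x + b * y := by
  rw [mul_add]
  exact add_le_add (mul_le_mul_of_nonneg_right (min_le_left a b) hx)
    (mul_le_mul_of_nonneg_right (min_le_right a b) hy)

lemma add_mul_le_max_mul {a b x y : ℝ} (hx : 0 ≤ x) (hy : 0 ≤ y) :
    a * x + b * y ≤ max a b * (x + y) := by
  rw [mul_add]
  exact add_le_add (mul_le_mul_of_nonneg_right (le_max_left a b) hx)
    (mul_le_mul_of_nonneg_right (le_max_right a b) hy)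

section Frobenius

variable {m n k : ℕ}

lemma frobSq_transpose (A : Matrix (Fin m) (Fin n) ℝ) : frobSq Aᵀ = frobSq A := by
  rw [frobSq, frobSq, transpose_transpose, trace_mul_comm]

lemma frobSq_mul_transpose {l : ℕ} (A : Matrix (Fin m) (Fin k) ℝ) (B : Matrix (Fin l) (Fin k) ℝ) :
    frobSq (A * Bᵀ) = (Aᵀ * A * (Bᵀ * B)).trace := by
  rw [frobSq, transpose_mul, transpose_transpose, Matrix.mul_assoc B, ← Matrix.mul_assoc Aᵀ,
    trace_mul_comm, Matrix.mul_assoc (Aᵀ * A)]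

lemma frobSq_add_of_orthonormal {l : ℕ} {U : Matrix (Fin m) (Fin k) ℝ}
    {U' : Matrix (Fin m) (Fin l) ℝ} (hU : Uᵀ * U = 1) (hU' : U'ᵀ * U' = 1) (hUU' : Uᵀ * U' = 0)
    (A : Matrix (Fin k) (Fin n) ℝ) (B : Matrix (Fin l) (Fin n) ℝ) :
    frobSq (U * A + U' * B) = frobSq A + frobSq B := by
  have hU'U : U'ᵀ * U = 0 := by rw [← transpose_transpose U, ← transpose_mul, hUU', transpose_zero]
  have hexp : (U * A + U' * B)ᵀ * (U * A + U' * B) = Aᵀ * A + Bᵀ * B := by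
    simp only [transpose_add, transpose_mul, Matrix.add_mul, Matrix.mul_add, Matrix.mul_assoc]
    simp only [← Matrix.mul_assoc Uᵀ, ← Matrix.mul_assoc U'ᵀ, hU, hU', hUU', hU'U, Matrix.one_mul,
      Matrix.zero_mul, Matrix.mul_zero, add_zero, zero_add]
  rw [frobSq, hexp, trace_add, frobSq, frobSq]

end Frobenius

theorem stmt15_general {p₁ p₂ r : ℕ}
    (VY WY : Matrix (Fin r) (Fin r) ℝ) (hVY : VY.PosDef) (hWY : WY.PosDef)
    (U : Matrix (Fin p₁) (Fin r) ℝ) (Uperp : Matrix (Fin p₁) (Fin (p₁ - r)) ℝ)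
    (hU : Uᵀ * U = 1) (hUperp : Uperpᵀ * Uperp = 1) (hUUperp : Uᵀ * Uperp = 0)
    (Y : Matrix (Fin p₂) (Fin r) ℝ)
    (D : Matrix (Fin (p₁ - r)) (Fin r) ℝ)
    (θU : Matrix (Fin p₁) (Fin r) ℝ) (hθU : θU = Uperp * D)
    (θY : Matrix (Fin p₂) (Fin r) ℝ)
    (ξ : Matrix (Fin p₁) (Fin p₂) ℝ) (hξ : ξ = U * θYᵀ + θU * Yᵀ)
    (g : ℝ) (hg : g = Matrix.trace (VY * Dᵀ * D) + Matrix.trace (WY * θYᵀ * θY)) :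
    min (eigMin WY⁻¹)
        (eigMin ((psdSqrt hVY.posSemidef)⁻¹ * (Yᵀ * Y) * (psdSqrt hVY.posSemidef)⁻¹)) * g
      ≤ frobSq ξ ∧
    frobSq ξ ≤
      max (eigMax WY⁻¹)
        (eigMax ((psdSqrt hVY.posSemidef)⁻¹ * (Yᵀ * Y) * (psdSqrt hVY.posSemidef)⁻¹)) * g := by
  have hθθ : (θYᵀ * θY).PosSemidef := posSemidef_transpose_mul_self θY
  have hDD : (Dᵀ * D).PosSemidef := posSemidef_transpose_mul_self D
  have hfrob : frobSq ξ = (θYᵀ * θY * 1).trace + (Dᵀ * D * (Yᵀ * Y)).trace := by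
    rw [hξ, hθU, Matrix.mul_assoc, frobSq_add_of_orthonormal hU hUperp hUUperp, frobSq_transpose,
      frobSq_mul_transpose, frobSq, mul_one]
  have hWinv : (CFC.sqrt WY)⁻¹ * 1 * (CFC.sqrt WY)⁻¹ = WY⁻¹ := by
    rw [mul_one, ← Matrix.mul_inv_rev, CFC.sqrt_mul_sqrt_self WY hWY.posSemidef.nonneg]
  obtain ⟨hW₁, hW₂⟩ := trace_mul_mem_Icc_of_posDef hWY hθθ isHermitian_one
  obtain ⟨hV₁, hV₂⟩ :=
    trace_mul_mem_Icc_of_posDef hVY hDD (posSemidef_transpose_mul_self Y).isHermitian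
  rw [hWinv] at hW₁ hW₂
  rw [psdSqrt_eq_sqrt, hfrob, hg, Matrix.mul_assoc VY, Matrix.mul_assoc WY, add_comm]
  have hW₀ := hWY.posSemidef.trace_mul_nonneg hθθ
  have hV₀ := hVY.posSemidef.trace_mul_nonneg hDD
  exact ⟨(min_mul_add_le hW₀ hV₀).trans (add_le_add hW₁ hV₁),
    (add_le_add hW₂ hV₂).trans (add_mul_le_max_mul hW₀ hV₀)⟩

/-- Spectrum bounds for the map `(θ_U, θ_Y) ↦ Uθ_Yᵀ + θ_UYᵀ` on the horizontal space of
the subspace-projection quotient geometry on fixed-rank matrices. Here `hVY.posSemidef.sqrt`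
is the symmetric positive definite square root `V_Y^{1/2}` of `V_Y`. -/
theorem stmt15 {p₁ p₂ r : ℕ}
    (VY WY : Matrix (Fin r) (Fin r) ℝ) (hVY : VY.PosDef) (hWY : WY.PosDef)
    (U : Matrix (Fin p₁) (Fin r) ℝ) (Uperp : Matrix (Fin p₁) (Fin (p₁ - r)) ℝ)
    (hU : Uᵀ * U = 1) (hUperp : Uperpᵀ * Uperp = 1) (hUUperp : Uᵀ * Uperp = 0)
    (Y : Matrix (Fin p₂) (Fin r) ℝ) (hY : Y.rank = r)
    (D : Matrix (Fin (p₁ - r)) (Fin r) ℝ)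
    (θU : Matrix (Fin p₁) (Fin r) ℝ) (hθU : θU = Uperp * D)
    (θY : Matrix (Fin p₂) (Fin r) ℝ)
    (ξ : Matrix (Fin p₁) (Fin p₂) ℝ) (hξ : ξ = U * θYᵀ + θU * Yᵀ)
    (g : ℝ) (hg : g = Matrix.trace (VY * Dᵀ * D) + Matrix.trace (WY * θYᵀ * θY)) :
    min (eigMin WY⁻¹)
        (eigMin ((psdSqrt hVY.posSemidef)⁻¹ * (Yᵀ * Y) * (psdSqrt hVY.posSemidef)⁻¹)) * g
      ≤ frobSq ξ ∧
    frobSq ξ ≤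
      max (eigMax WY⁻¹)
        (eigMax ((psdSqrt hVY.posSemidef)⁻¹ * (Yᵀ * Y) * (psdSqrt hVY.posSemidef)⁻¹)) * g :=
  stmt15_general VY WY hVY hWY U Uperp hU hUperp hUUperp Y D θU hθU θY ξ hξ g hg
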